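/- Let c ≥ 1. If for every binary word w of length n there is an SLP for w of size at most c·g(w) computable in polynomial time, then for every word w over an arbitrary alphabet there is an SLP for w of size at most 6c·g(w) computable in polynomial time. (Size statement: for all words w over Σ = {c₀,…,c_{k-1}} in which every letter occurs, g(φ(w)) ≤ 3 g(w) and g(w) ≤ 2 g(φ(w)), where φ(c_i) = a^i b; hence a c-approximation on the binary encoding φ(w) yields a 6c-approximation for w.) -/

import Mathlib

/-- A straight-line program over alphabet `α`, in topologically-sorted form:
nonterminals are `Fin n`, each has exactly one nonempty right-hand side, and
right-hand sides only refer to strictly smaller nonterminals (acyclicity). -/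
structure SLP (α : Type) where
  n : ℕ
  rhs : Fin n → List (α ⊕ Fin n)
  rhs_ne : ∀ i, rhs i ≠ []
  acyc : ∀ i j, Sum.inr j ∈ rhs i → (j : ℕ) < (i : ℕ)
  start : Fin n

namespace SLP

variable {α : Type}

/-- The word produced by nonterminal `i`. -/
def valAux (G : SLP α) (i : Fin G.n) : List α :=
  (G.rhs i).attach.flatMap (fun s =>
    match s with
    | ⟨Sum.inl a, _⟩ => [a]
    | ⟨Sum.inr j, hj⟩ => G.valAux j)
termination_by (i : ℕ)
decreasing_by exact G.acyc i j hj

/-- The word produced by the SLP. -/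
def val (G : SLP α) : List α := G.valAux G.start

/-- The size of the SLP: sum of lengths of all right-hand sides. -/
def size (G : SLP α) : ℕ := ∑ i : Fin G.n, (G.rhs i).length

end SLP

/-- `g w`: the minimal size of an SLP producing `w`. -/
noncomputable def g {α : Type} (w : List α) : ℕ :=
  sInf { s | ∃ G : SLP α, G.size = s ∧ G.val = w }

/-- The binary encoding `φ : {c₀,…,c_{k-1}}^* → {a,b}^*`, `φ(c_i) = aⁱb`,
where `a := true` and `b := false`. -/
def phi {k : ℕ} (w : List (Fin k)) : List Bool :=
  (w.map (fun c => List.replicate (c : ℕ) true ++ [false])).flatten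

/-!
Encoding: in a smallest SLP for `w`, replace each letter `cᵢ` by a nonterminal `Xᵢ` of the chain
`X₀ → b`, `Xᵢ → a Xᵢ₋₁`, which produces `φ(cᵢ) = aⁱb`. This costs `2k - 1` symbols, and `k ≤ g(w)`
because every letter occurs in a right-hand side; hence `g(φ(w)) + 1 ≤ 3 g(w)`.

Decoding: a binary word containing `b` has the form `aᵖ b φ(u) aᵠ`, and in any context only its
first decoded letter depends on what precedes it. So every nonterminal `X` of an SLP `B` for
`φ(w)` gets a new nonterminal for the word `u` of its value, and each symbol of a rule of `B`
becomes at most one letter followed by such a nonterminal: this yields an SLP for `w` of size at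
most `2|B| + 2`. With `|B| ≤ c g(φ(w))` this is at most `6c g(w)`.
-/

namespace SLP

variable {α : Type} (G : SLP α)

def symVal : α ⊕ Fin G.n → List α
  | .inl a => [a]
  | .inr j => G.valAux j

theorem valAux_eq_flatMap (i : Fin G.n) : G.valAux i = (G.rhs i).flatMap G.symVal := by
  rw [valAux]
  conv_rhs => rw [← List.attach_map_subtype_val (G.rhs i), List.flatMap_map]
  congr 1
  funext ⟨s, hs⟩
  rcases s with a | j <;> rfl

theorem valAux_ne_nil (i : Fin G.n) : G.valAux i ≠ [] := by
  induction i using WellFoundedLT.induction with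
  | _ i ih =>
    obtain ⟨s, hs⟩ := List.exists_mem_of_ne_nil _ (G.rhs_ne i)
    rw [valAux_eq_flatMap, Ne, List.flatMap_eq_nil_iff]
    intro h
    rcases s with a | j
    · exact List.cons_ne_nil _ _ (h _ hs)
    · exact ih j (G.acyc i j hs) (h _ hs)

theorem val_ne_nil : G.val ≠ [] := G.valAux_ne_nil _

theorem exists_inl_mem_rhs_of_mem_valAux {a : α} {i : Fin G.n} (ha : a ∈ G.valAux i) :
    ∃ i', .inl a ∈ G.rhs i' := by
  induction i using WellFoundedLT.induction with
  | _ i ih =>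
    rw [valAux_eq_flatMap, List.mem_flatMap] at ha
    obtain ⟨s, hs, ha⟩ := ha
    rcases s with b | j
    · rw [List.mem_singleton.1 ha]
      exact ⟨i, hs⟩
    · exact ih j (G.acyc i j hs) ha

theorem card_toFinset_val_le_size [DecidableEq α] : G.val.toFinset.card ≤ G.size := by
  let letters (i : Fin G.n) : Finset α := ((G.rhs i).filterMap Sum.getLeft?).toFinset
  have hsub : G.val.toFinset ⊆ Finset.univ.biUnion letters := by
    intro a ha
    obtain ⟨i, hi⟩ := G.exists_inl_mem_rhs_of_mem_valAux (List.mem_toFinset.1 ha)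
    simp only [Finset.mem_biUnion, Finset.mem_univ, true_and, letters, List.mem_toFinset,
      List.mem_filterMap]
    exact ⟨i, _, hi, rfl⟩
  calc G.val.toFinset.card ≤ (Finset.univ.biUnion letters).card := Finset.card_le_card hsub
    _ ≤ ∑ i, (letters i).card := Finset.card_biUnion_le
    _ ≤ G.size := Finset.sum_le_sum fun i _ =>
        (List.toFinset_card_le _).trans (List.length_filterMap_le _ _)

def ofList (w : List α) (hw : w ≠ []) : SLP α where
  n := 1
  rhs _ := w.map .inl
  rhs_ne _ := by simpa using hw
  acyc _ _ h := by simp at h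
  start := 0

theorem val_ofList (w : List α) (hw : w ≠ []) : (ofList w hw).val = w := by
  rw [val, valAux_eq_flatMap]
  simp [ofList, symVal, List.flatMap_map]

end SLP

theorem g_le_size {α : Type} (G : SLP α) : g G.val ≤ G.size :=
  Nat.sInf_le ⟨G, rfl, rfl⟩

theorem exists_size_eq_g {α : Type} {w : List α} (hw : w ≠ []) :
    ∃ G : SLP α, G.val = w ∧ G.size = g w := by
  obtain ⟨G, hs, hv⟩ := Nat.sInf_mem (s := {s | ∃ G : SLP α, G.size = s ∧ G.val = w})
    ⟨_, SLP.ofList w hw, rfl, SLP.val_ofList w hw⟩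
  exact ⟨G, hv, hs⟩

theorem card_toFinset_le_g {α : Type} [DecidableEq α] (w : List α) : w.toFinset.card ≤ g w := by
  rcases eq_or_ne w [] with rfl | hw
  · simp
  obtain ⟨G, rfl, hG⟩ := exists_size_eq_g hw
  exact hG ▸ G.card_toFinset_val_le_size

section Encode

variable {k : ℕ}

theorem phi_append (u v : List (Fin k)) : phi (u ++ v) = phi u ++ phi v := by
  simp [phi]

theorem phi_flatMap {β : Type} (l : List β) (f : β → List (Fin k)) :
    phi (l.flatMap f) = l.flatMap (phi ∘ f) := by
  induction l with
  | nil => rfl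
  | cons a l ih => simp [phi_append, ih]

theorem phi_singleton (c : Fin k) : phi [c] = List.replicate c true ++ [false] := by
  simp [phi]

def chainRhs {n : ℕ} (c : Fin k) : List (Bool ⊕ Fin (k + n)) :=
  if h : (c : ℕ) = 0 then [.inl false] else [.inl true, .inr (Fin.castAdd n ⟨c - 1, by omega⟩)]

namespace SLP

variable (G : SLP (Fin k))

def encodeSym : Fin k ⊕ Fin G.n → Bool ⊕ Fin (k + G.n)
  | .inl c => .inr (Fin.castAdd G.n c)
  | .inr j => .inr (Fin.natAdd k j)

/-- Nonterminal `c < k` is the chain rule `X_c → a X_{c-1}` (with `X_0 → b`), so that it produces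
`φ(c) = aᶜb`; the rules of `G` follow, with each letter `c` replaced by `X_c`. -/
@[reducible] def encodePhi : SLP Bool where
  n := k + G.n
  rhs := Fin.addCases chainRhs fun j => (G.rhs j).map G.encodeSym
  rhs_ne i := by
    induction i using Fin.addCases with
    | left c => simp only [Fin.addCases_left, chainRhs]; split <;> simp
    | right j => simpa using G.rhs_ne j
  acyc i j hj := by
    induction i using Fin.addCases with
    | left c =>
      simp only [Fin.addCases_left, chainRhs] at hj
      split at hj <;> simp at hj
      subst hj
      simp only [Fin.val_castAdd]
      omega
    | right i =>
      simp only [Fin.addCases_right, List.mem_map] at hj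
      obtain ⟨s | s, hs, hsj⟩ := hj <;> simp only [encodeSym, Sum.inr.injEq] at hsj <;> subst hsj
      · simp only [Fin.val_castAdd, Fin.val_natAdd]
        omega
      · simpa using G.acyc i s hs
  start := Fin.natAdd k G.start

theorem encodePhi_rhs_castAdd (c : Fin k) :
    G.encodePhi.rhs (Fin.castAdd G.n c) = chainRhs c :=
  Fin.addCases_left (motive := fun _ => List (Bool ⊕ Fin (k + G.n))) (left := chainRhs)
    (right := fun j => (G.rhs j).map G.encodeSym) c

theorem encodePhi_rhs_natAdd (i : Fin G.n) :
    G.encodePhi.rhs (Fin.natAdd k i) = (G.rhs i).map G.encodeSym :=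
  Fin.addCases_right (motive := fun _ => List (Bool ⊕ Fin (k + G.n))) (left := chainRhs)
    (right := fun j => (G.rhs j).map G.encodeSym) i

theorem encodePhi_valAux_castAdd (c : Fin k) :
    G.encodePhi.valAux (Fin.castAdd G.n c) = phi [c] := by
  obtain ⟨c, hc⟩ := c
  rw [valAux_eq_flatMap, encodePhi_rhs_castAdd]
  induction c with
  | zero => simp [chainRhs, symVal, phi]
  | succ c ih =>
    simp only [chainRhs, Nat.add_one_ne_zero, dite_false, List.flatMap_cons, List.flatMap_nil,
      symVal, Nat.add_sub_cancel]
    rw [valAux_eq_flatMap, encodePhi_rhs_castAdd, ih (by omega)]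
    simp [phi, List.replicate_succ]

theorem encodePhi_valAux_natAdd (i : Fin G.n) :
    G.encodePhi.valAux (Fin.natAdd k i) = phi (G.valAux i) := by
  induction i using WellFoundedLT.induction with
  | _ i ih =>
    rw [valAux_eq_flatMap, valAux_eq_flatMap, phi_flatMap, encodePhi_rhs_natAdd,
      List.flatMap_map]
    refine List.flatMap_congr fun s hs => ?_
    rcases s with c | j
    · exact G.encodePhi_valAux_castAdd c
    · exact ih j (G.acyc i j hs)

theorem encodePhi_val : G.encodePhi.val = phi G.val :=
  G.encodePhi_valAux_natAdd G.start

theorem encodePhi_size [NeZero k] : G.encodePhi.size + 1 = 2 * k + G.size := by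
  obtain ⟨m, rfl⟩ : ∃ m, k = m + 1 := Nat.exists_eq_add_one.2 (NeZero.pos k)
  simp only [size, encodePhi, Fin.sum_univ_add, Fin.addCases_left, Fin.addCases_right,
    List.length_map, Fin.sum_univ_succ]
  simp [chainRhs]
  ring

end SLP

end Encode

def padNil {k : ℕ} [NeZero k] {β : Type} (l : List (Fin k ⊕ β)) : List (Fin k ⊕ β) :=
  if l = [] then [.inl 0] else l

theorem padNil_ne_nil {k : ℕ} [NeZero k] {β : Type} (l : List (Fin k ⊕ β)) : padNil l ≠ [] := by
  unfold padNil; split <;> simp_all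

theorem inr_mem_of_inr_mem_padNil {k : ℕ} [NeZero k] {β : Type} {l : List (Fin k ⊕ β)} {b : β}
    (h : .inr b ∈ padNil l) : .inr b ∈ l := by
  unfold padNil at h; split at h <;> simp_all

theorem padNil_of_ne_nil {k : ℕ} [NeZero k] {β : Type} {l : List (Fin k ⊕ β)} (hl : l ≠ []) :
    padNil l = l :=
  if_neg hl

theorem length_padNil_le {k : ℕ} [NeZero k] {β : Type} {l : List (Fin k ⊕ β)} {m : ℕ}
    (hm : 1 ≤ m) (hl : l.length ≤ m) : (padNil l).length ≤ m := by
  unfold padNil; split <;> simp_all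

section Decode

variable (k : ℕ) [NeZero k]

/-- Reads a binary word, preceded by `p` further `a`s, as a sequence of blocks `aⁱb`, each giving
the letter `i mod k` (so that every binary word decodes); the second component counts the trailing
`a`s. -/
def decodeFrom : ℕ → List Bool → List (Fin k) × ℕ
  | p, [] => ([], p)
  | p, true :: v => decodeFrom (p + 1) v
  | p, false :: v => (Fin.ofNat k p :: (decodeFrom 0 v).1, (decodeFrom 0 v).2)

theorem decodeFrom_append (p : ℕ) (u v : List Bool) :
    decodeFrom k p (u ++ v) =
      ((decodeFrom k p u).1 ++ (decodeFrom k (decodeFrom k p u).2 v).1,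
        (decodeFrom k (decodeFrom k p u).2 v).2) := by
  induction u generalizing p with
  | nil => rfl
  | cons b u ih => cases b <;> simp [decodeFrom, ih]

theorem tail_decodeFrom (p : ℕ) (v : List Bool) :
    (decodeFrom k p v).1.tail = (decodeFrom k 0 v).1.tail := by
  induction v generalizing p with
  | nil => rfl
  | cons b v ih =>
    cases b
    · rfl
    · simp only [decodeFrom, ih (p + 1), ih 1]

theorem decodeFrom_replicate_append (p m : ℕ) (v : List Bool) :
    decodeFrom k p (List.replicate m true ++ v) = decodeFrom k (p + m) v := by
  induction m generalizing p with
  | zero => rfl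
  | succ m ih => simp [List.replicate_succ, decodeFrom, ih, Nat.add_right_comm, Nat.add_assoc]

theorem decodeFrom_phi (w : List (Fin k)) : decodeFrom k 0 (phi w) = (w, 0) := by
  induction w with
  | nil => rfl
  | cons c w ih =>
    rw [← List.singleton_append, phi_append, phi_singleton, List.append_assoc,
      decodeFrom_replicate_append, List.singleton_append, decodeFrom, ih]
    simp

namespace SLP

variable (B : SLP Bool)

/-- How many `a`s precede an occurrence of `j` only affects the first letter decoded from it, so
nonterminal `j.castSucc` of the decoded grammar produces the rest,
`(decodeFrom k 0 (B.valAux j)).1.tail`, and is referenced only when that word is nonempty. -/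
def decodeRef : Bool ⊕ Fin B.n → List (Fin k ⊕ Fin (B.n + 1))
  | .inl _ => []
  | .inr j => if (decodeFrom k 0 (B.valAux j)).1.tail = [] then [] else [.inr j.castSucc]

def decodeSym (p : ℕ) (s : Bool ⊕ Fin B.n) : List (Fin k ⊕ Fin (B.n + 1)) :=
  match (decodeFrom k p (B.symVal s)).1 with
  | [] => []
  | x :: _ => .inl x :: B.decodeRef k s

def decodeRhs : ℕ → List (Bool ⊕ Fin B.n) → List (Fin k ⊕ Fin (B.n + 1))
  | _, [] => []
  | p, s :: l => B.decodeSym k p s ++ decodeRhs (decodeFrom k p (B.symVal s)).2 l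

theorem exists_eq_castSucc_of_inr_mem_decodeSym {p : ℕ} {s : Bool ⊕ Fin B.n} {i : Fin (B.n + 1)}
    (h : .inr i ∈ B.decodeSym k p s) : ∃ j, s = .inr j ∧ i = j.castSucc := by
  unfold decodeSym at h
  split at h
  · simp at h
  · rcases s with b | j
    · simp [decodeRef] at h
    · simp only [decodeRef, List.mem_cons, reduceCtorEq, false_or] at h
      split at h <;> simp_all

theorem exists_eq_castSucc_of_inr_mem_decodeRhs {p : ℕ} {l : List (Bool ⊕ Fin B.n)}
    {i : Fin (B.n + 1)} (h : .inr i ∈ B.decodeRhs k p l) :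
    ∃ j, .inr j ∈ l ∧ i = j.castSucc := by
  induction l generalizing p with
  | nil => simp [decodeRhs] at h
  | cons s l ih =>
    rcases List.mem_append.1 h with h | h
    · obtain ⟨j, rfl, rfl⟩ := B.exists_eq_castSucc_of_inr_mem_decodeSym k h
      exact ⟨j, List.mem_cons_self, rfl⟩
    · obtain ⟨j, hj, rfl⟩ := ih h
      exact ⟨j, List.mem_cons_of_mem _ hj, rfl⟩

theorem length_decodeSym_le (p : ℕ) (s : Bool ⊕ Fin B.n) :
    (B.decodeSym k p s).length ≤ 2 := by
  unfold decodeSym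
  split
  · simp
  · rcases s with b | j
    · simp [decodeRef]
    · simp only [decodeRef]; split <;> simp

theorem length_decodeRhs_le (p : ℕ) (l : List (Bool ⊕ Fin B.n)) :
    (B.decodeRhs k p l).length ≤ 2 * l.length := by
  induction l generalizing p with
  | nil => simp [decodeRhs]
  | cons s l ih =>
    simp only [decodeRhs, List.length_append, List.length_cons]
    have := B.length_decodeSym_le k p s
    have := ih (decodeFrom k p (B.symVal s)).2
    omega

theorem decodeRhs_eq_nil_or_eq_inl_cons (p : ℕ) (l : List (Bool ⊕ Fin B.n)) :
    B.decodeRhs k p l = [] ∨ ∃ x l', B.decodeRhs k p l = .inl x :: l' := by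
  induction l generalizing p with
  | nil => exact .inl rfl
  | cons s l ih =>
    simp only [decodeRhs, decodeSym]
    split
    · exact ih _
    · exact .inr ⟨_, _, rfl⟩

@[reducible] def decodePhi : SLP (Fin k) where
  n := B.n + 1
  rhs := Fin.lastCases (padNil (B.decodeSym k 0 (.inr B.start)))
    fun j => padNil (B.decodeRhs k 0 (B.rhs j)).tail
  rhs_ne i := by
    induction i using Fin.lastCases <;> simp only [Fin.lastCases_last, Fin.lastCases_castSucc] <;>
      exact padNil_ne_nil _
  acyc i j hj := by
    induction i using Fin.lastCases with
    | last =>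
      rw [Fin.lastCases_last] at hj
      obtain ⟨_, -, rfl⟩ :=
        B.exists_eq_castSucc_of_inr_mem_decodeSym k (inr_mem_of_inr_mem_padNil hj)
      exact Fin.castSucc_lt_last _
    | cast i =>
      rw [Fin.lastCases_castSucc] at hj
      obtain ⟨j, hji, rfl⟩ := B.exists_eq_castSucc_of_inr_mem_decodeRhs k
        (List.mem_of_mem_tail (inr_mem_of_inr_mem_padNil hj))
      exact B.acyc i j hji
  start := Fin.last B.n

theorem decodePhi_rhs_last :
    (B.decodePhi k).rhs (Fin.last B.n) = padNil (B.decodeSym k 0 (.inr B.start)) := by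
  exact Fin.lastCases_last (motive := fun _ => List (Fin k ⊕ Fin (B.n + 1)))

theorem decodePhi_rhs_castSucc (j : Fin B.n) :
    (B.decodePhi k).rhs j.castSucc = padNil (B.decodeRhs k 0 (B.rhs j)).tail := by
  exact Fin.lastCases_castSucc (motive := fun _ => List (Fin k ⊕ Fin (B.n + 1))) j

def DecodesAt (j : Fin B.n) : Prop :=
  (decodeFrom k 0 (B.valAux j)).1.tail ≠ [] →
    (B.decodePhi k).valAux j.castSucc = (decodeFrom k 0 (B.valAux j)).1.tail

theorem flatMap_decodeSym (p : ℕ) (s : Bool ⊕ Fin B.n) (hs : ∀ j, s = .inr j → B.DecodesAt k j) :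
    (B.decodeSym k p s).flatMap (B.decodePhi k).symVal = (decodeFrom k p (B.symVal s)).1 := by
  have htail := tail_decodeFrom k p (B.symVal s)
  unfold decodeSym
  split
  · simp_all
  · rename_i x u hxu
    rw [hxu, List.tail_cons] at htail
    rw [hxu, List.flatMap_cons, symVal, List.singleton_append, List.cons_inj_right]
    rcases s with b | j
    · cases b <;> simp_all [decodeRef, decodeFrom, symVal]
    · rw [htail, symVal]
      simp only [decodeRef]
      split
      · simp_all
      · rename_i hne
        simp [symVal, hs j rfl hne]

theorem flatMap_decodeRhs (p : ℕ) (l : List (Bool ⊕ Fin B.n))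
    (hl : ∀ j, .inr j ∈ l → B.DecodesAt k j) :
    (B.decodeRhs k p l).flatMap (B.decodePhi k).symVal =
      (decodeFrom k p (l.flatMap B.symVal)).1 := by
  induction l generalizing p with
  | nil => rfl
  | cons s l ih =>
    rw [decodeRhs, List.flatMap_append, List.flatMap_cons, decodeFrom_append,
      B.flatMap_decodeSym k p s fun j hj => hl j (hj ▸ List.mem_cons_self),
      ih _ fun j hj => hl j (List.mem_cons_of_mem _ hj)]

theorem flatMap_tail_decodeRhs (p : ℕ) (l : List (Bool ⊕ Fin B.n)) :
    (B.decodeRhs k p l).tail.flatMap (B.decodePhi k).symVal =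
      ((B.decodeRhs k p l).flatMap (B.decodePhi k).symVal).tail := by
  rcases B.decodeRhs_eq_nil_or_eq_inl_cons k p l with h | ⟨x, l', h⟩ <;> simp [h, symVal]

theorem decodesAt (j : Fin B.n) : B.DecodesAt k j := by
  induction j using WellFoundedLT.induction with
  | _ j ih =>
    intro hne
    have hval : (B.decodeRhs k 0 (B.rhs j)).tail.flatMap (B.decodePhi k).symVal =
        (decodeFrom k 0 (B.valAux j)).1.tail := by
      rw [flatMap_tail_decodeRhs, flatMap_decodeRhs _ _ _ _ fun i hi => ih i (B.acyc j i hi),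
        ← valAux_eq_flatMap]
    have hne' : (B.decodeRhs k 0 (B.rhs j)).tail ≠ [] := by
      rintro h
      rw [h] at hval
      exact hne hval.symm
    rw [valAux_eq_flatMap, decodePhi_rhs_castSucc, padNil_of_ne_nil hne', hval]

theorem decodePhi_val (h : (decodeFrom k 0 B.val).1 ≠ []) :
    (B.decodePhi k).val = (decodeFrom k 0 B.val).1 := by
  have hval : (B.decodeSym k 0 (.inr B.start)).flatMap (B.decodePhi k).symVal =
      (decodeFrom k 0 B.val).1 :=
    B.flatMap_decodeSym k 0 _ fun j _ => B.decodesAt k j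
  have hne : B.decodeSym k 0 (.inr B.start) ≠ [] := by
    rintro h'
    rw [h'] at hval
    exact h hval.symm
  rw [val, valAux_eq_flatMap, decodePhi_rhs_last, padNil_of_ne_nil hne, hval]

theorem decodePhi_size : (B.decodePhi k).size ≤ 2 * B.size + 2 := by
  rw [size, Fin.sum_univ_castSucc, size, Finset.mul_sum]
  gcongr with j
  · rw [decodePhi_rhs_castSucc]
    have := List.length_pos_iff.2 (B.rhs_ne j)
    exact length_padNil_le (by omega)
      ((List.tail_sublist _).length_le.trans (B.length_decodeRhs_le k 0 _))
  · rw [decodePhi_rhs_last]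
    exact length_padNil_le (by norm_num) (B.length_decodeSym_le k 0 _)

end SLP

end Decode

theorem g_phi_add_one_le {k : ℕ} {w : List (Fin k)} (hw : w ≠ []) :
    g (phi w) + 1 ≤ 2 * k + g w := by
  have : NeZero k := ⟨(w.head hw).pos.ne'⟩
  obtain ⟨G, rfl, hG⟩ := exists_size_eq_g hw
  have := g_le_size G.encodePhi
  rw [G.encodePhi_val] at this
  have := G.encodePhi_size
  omega

theorem le_g_of_forall_mem {k : ℕ} {w : List (Fin k)} (hall : ∀ i : Fin k, i ∈ w) : k ≤ g w := by
  classical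
  have hw : w.toFinset = Finset.univ :=
    Finset.eq_univ_of_forall fun i => List.mem_toFinset.2 (hall i)
  simpa [hw] using card_toFinset_le_g w

theorem approx_transfer_general (c : ℕ) (hc : 1 ≤ c) (k : ℕ)
    (w : List (Fin k)) (hall : ∀ i : Fin k, i ∈ w)
    (B : SLP Bool) (hB : B.val = phi w) (happrox : B.size ≤ c * g (phi w)) :
    ∃ A : SLP (Fin k), A.val = w ∧ A.size ≤ 6 * c * g w := by
  have hw : w ≠ [] := by
    rintro rfl
    exact B.val_ne_nil hB
  have : NeZero k := ⟨(w.head hw).pos.ne'⟩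
  have hdecode : (decodeFrom k 0 B.val).1 = w := by rw [hB, decodeFrom_phi]
  refine ⟨B.decodePhi k, hdecode ▸ B.decodePhi_val k (hdecode ▸ hw), ?_⟩
  have hphi : c * (g (phi w) + 1) ≤ c * (3 * g w) :=
    Nat.mul_le_mul_left c ((g_phi_add_one_le hw).trans (by linarith [le_g_of_forall_mem hall]))
  calc (B.decodePhi k).size ≤ 2 * B.size + 2 := B.decodePhi_size k
    _ ≤ 2 * (c * g (phi w)) + 2 := by gcongr
    _ ≤ 6 * c * g w := by linarith

/-- Size statement behind the approximation-ratio transfer: a `c`-approximating SLP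
for the binary encoding `φ(w)` yields a `6c`-approximating SLP for `w`. -/
theorem approx_transfer (c : ℕ) (hc : 1 ≤ c) (k : ℕ) (hk : 1 ≤ k)
    (w : List (Fin k)) (hall : ∀ i : Fin k, i ∈ w)
    (B : SLP Bool) (hB : B.val = phi w) (happrox : B.size ≤ c * g (phi w)) :
    ∃ A : SLP (Fin k), A.val = w ∧ A.size ≤ 6 * c * g w :=
  approx_transfer_general c hc k w hall B hB happrox
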